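/- arXiv:2310.13658 — 2 statements merged into one kernel-verified Lean document; each statement's English description precedes it below -/
import Mathlib

section
/- For every integer n ≥ 6, the number of partitions of n with no parts equal to 1, at most one part equal to 2, and whose largest part occurs more than once equals -∑_{k=5}^{n+5} S^{(5)}_{n+5,k} · μ(k); equivalently, (p(n) - 2p(n-1) + p(n-2)) - (p(n-4) - 2p(n-5) + p(n-6)) = -∑_{k=5}^{n+5} S^{(5)}_{n+5,k} · μ(k). -/
open Finset

/-- The number of partitions of `n`. -/
def p (n : ℕ) : ℕ := Fintype.card (Nat.Partition n)

/-- The partition function extended by zero to negative integer arguments. -/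
def pz (m : ℤ) : ℤ := if 0 ≤ m then (p m.toNat : ℤ) else 0

/-- `S r n k` : the total number of parts equal to `k` in all partitions of `n`
whose parts are all at least `r`. -/
def S (r n k : ℕ) : ℕ :=
  ∑ P : Nat.Partition n, if ∀ i ∈ P.parts, r ≤ i then P.parts.count k else 0

/-!
Write `G r` for the generating function of partitions all of whose parts are at least `r`.
Removing one part `k` shows `G (k + 1) = (1 - X ^ k) * G k`, so `G 5` is `G 1`, the partition
generating function, times `(1 - X) (1 - X²) (1 - X³) (1 - X⁴)`.

Partitions without parts `1` and with at most one part `2` have generating function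
`(1 - X⁴) * G 2`. For `n ≥ 6`, lowering a unique largest part by one matches those partitions
of `n` whose largest part is not repeated with all such partitions of `n - 1`. So the
partitions being counted have generating function `(1 - X)² (1 - X⁴) G 1` in degrees `≥ 6`,
and the second-difference formula is the same coefficient written out.

A partition with `j` or more parts `k` is `j` copies of `k` together with a partition of
`N - j k`, so `∑ₖ S⁽⁵⁾(N, k) μ(k)` is the `N`-th coefficient of `W * G 5`, where `W` has
coefficients `∑_{d ∣ m, d ≥ 5} μ(d)`. Since `∑_{d ∣ m} μ(d) = [m = 1]` and the only divisors
below `5` with `μ ≠ 0` are `1, 2, 3`, this coefficient is `[2 ∣ m] + [3 ∣ m] - 1` for `m ≥ 5`,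
which gives `W (1 - X²)(1 - X³) = X⁶ - X⁵`. Hence `-W * G 5 = X⁵ (1 - X)² (1 - X⁴) G 1`.
-/

open PowerSeries ArithmeticFunction
open scoped ArithmeticFunction.Moebius

theorem Nat.card_subtype_eq_card_and_add_card_and_not {α : Type*} [Finite α] (P Q : α → Prop) :
    Nat.card {x // P x} = Nat.card {x // P x ∧ Q x} + Nat.card {x // P x ∧ ¬ Q x} := by
  classical
  have := Fintype.ofFinite α
  simp only [Nat.card_eq_fintype_card, Fintype.card_subtype, ← Finset.filter_filter]
  exact (Finset.card_filter_add_card_filter_not _).symm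

namespace Nat.Partition

theorem parts_ne_zero {n : ℕ} (hn : n ≠ 0) (P : n.Partition) : P.parts ≠ 0 :=
  fun h => hn (by rw [← P.parts_sum, h, Multiset.sum_zero])

theorem one_notMem_parts_iff {n : ℕ} (P : n.Partition) : 1 ∉ P.parts ↔ ∀ i ∈ P.parts, 2 ≤ i :=
  ⟨fun h i hi => Nat.lt_of_le_of_ne (P.parts_pos hi) (by rintro rfl; exact h hi),
    fun h h1 => by simpa using h 1 h1⟩

theorem card_congr_parts {m m' : ℕ} {Q Q' : Multiset ℕ → Prop} (f g : Multiset ℕ → Multiset ℕ)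
    (hf : ∀ P : m.Partition, Q P.parts →
      (∀ i ∈ f P.parts, 0 < i) ∧ (f P.parts).sum = m' ∧ Q' (f P.parts))
    (hg : ∀ P : m'.Partition, Q' P.parts →
      (∀ i ∈ g P.parts, 0 < i) ∧ (g P.parts).sum = m ∧ Q (g P.parts))
    (hgf : ∀ P : m.Partition, Q P.parts → g (f P.parts) = P.parts)
    (hfg : ∀ P : m'.Partition, Q' P.parts → f (g P.parts) = P.parts) :
    Nat.card {P : m.Partition // Q P.parts} = Nat.card {P : m'.Partition // Q' P.parts} :=
  Nat.card_congr
    { toFun := fun P => ⟨⟨f P.1.parts, (hf P.1 P.2).1 _, (hf P.1 P.2).2.1⟩, (hf P.1 P.2).2.2⟩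
      invFun := fun P => ⟨⟨g P.1.parts, (hg P.1 P.2).1 _, (hg P.1 P.2).2.1⟩, (hg P.1 P.2).2.2⟩
      left_inv := fun P => Subtype.ext (Nat.Partition.ext (hgf P.1 P.2))
      right_inv := fun P => Subtype.ext (Nat.Partition.ext (hfg P.1 P.2)) }

end Nat.Partition

noncomputable def cardPartsGE (r m : ℕ) : ℕ :=
  Nat.card {P : m.Partition // ∀ i ∈ P.parts, r ≤ i}

theorem card_partsGE_and_le_parts {r : ℕ} (hr : 0 < r) {t : Multiset ℕ} (ht : ∀ i ∈ t, r ≤ i)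
    (m : ℕ) :
    Nat.card {P : (m + t.sum).Partition // (∀ i ∈ P.parts, r ≤ i) ∧ t ≤ P.parts} =
      cardPartsGE r m := by
  refine Nat.Partition.card_congr_parts (Q := fun s => (∀ i ∈ s, r ≤ i) ∧ t ≤ s)
    (Q' := fun s => ∀ i ∈ s, r ≤ i) (· - t) (t + ·) ?_ ?_ ?_ ?_
  · rintro P ⟨hP, htP⟩
    have hsum := P.parts_sum
    rw [← add_tsub_cancel_of_le htP, Multiset.sum_add] at hsum
    exact ⟨fun i hi => hr.trans_le (hP i (Multiset.mem_of_le (Multiset.sub_le_self _ _) hi)),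
      by omega, fun i hi => hP i (Multiset.mem_of_le (Multiset.sub_le_self _ _) hi)⟩
  · intro P hP
    have hge : ∀ i ∈ t + P.parts, r ≤ i := fun i hi =>
      (Multiset.mem_add.mp hi).elim (ht i) (hP i)
    exact ⟨fun i hi => hr.trans_le (hge i hi), by rw [Multiset.sum_add, P.parts_sum, add_comm],
      hge, Multiset.le_add_right _ _⟩
  · exact fun P hP => add_tsub_cancel_of_le hP.2
  · exact fun P _ => add_tsub_cancel_left _ _

theorem card_partsGE_and_le_count {r k : ℕ} (hr : 0 < r) (hrk : r ≤ k) (j m : ℕ) :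
    Nat.card {P : m.Partition // (∀ i ∈ P.parts, r ≤ i) ∧ j ≤ P.parts.count k} =
      if j * k ≤ m then cardPartsGE r (m - j * k) else 0 := by
  simp_rw [Multiset.le_count_iff_replicate_le]
  split_ifs with h
  · obtain ⟨d, rfl⟩ : ∃ d, m = d + j * k := ⟨m - j * k, by omega⟩
    have := card_partsGE_and_le_parts hr (t := Multiset.replicate j k)
      (fun i hi => (Multiset.eq_of_mem_replicate hi).symm ▸ hrk) d
    rwa [Multiset.sum_replicate, smul_eq_mul, Nat.add_sub_cancel] at *
  · refine Nat.card_eq_zero.mpr (Or.inl ⟨fun ⟨P, _, hle⟩ => h ?_⟩)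
    have hsum := congrArg Multiset.sum (add_tsub_cancel_of_le hle)
    rw [Multiset.sum_add, P.parts_sum, Multiset.sum_replicate, smul_eq_mul] at hsum
    omega

theorem cardPartsGE_eq_succ_add {k : ℕ} (hk : 0 < k) (m : ℕ) :
    cardPartsGE k m = cardPartsGE (k + 1) m + if k ≤ m then cardPartsGE k (m - k) else 0 := by
  rw [cardPartsGE, Nat.card_subtype_eq_card_and_add_card_and_not _
    (fun P : m.Partition => 1 ≤ P.parts.count k), card_partsGE_and_le_count hk le_rfl,
    one_mul, add_comm]
  congr 1
  refine Nat.card_congr (Equiv.subtypeEquivRight fun P => ?_)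
  simp only [not_le, Nat.lt_one_iff, Multiset.count_eq_zero]
  constructor
  · exact fun ⟨hP, hkP⟩ i hi => (hP i hi).lt_of_ne fun e => hkP (e ▸ hi)
  · exact fun hP => ⟨fun i hi => Nat.le_of_succ_le (hP i hi),
      fun hkP => Nat.not_succ_le_self k (hP k hkP)⟩

theorem cardPartsGE_one (m : ℕ) : cardPartsGE 1 m = p m := by
  rw [cardPartsGE, p, ← Nat.card_eq_fintype_card]
  exact Nat.card_congr (Equiv.subtypeUnivEquiv fun P _ hi => P.parts_pos hi)

noncomputable def genFunPartsGE (r : ℕ) : ℤ⟦X⟧ := PowerSeries.mk fun m => (cardPartsGE r m : ℤ)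

theorem genFunPartsGE_succ {k : ℕ} (hk : 0 < k) :
    genFunPartsGE (k + 1) = (1 - X ^ k) * genFunPartsGE k := by
  ext m
  simp only [genFunPartsGE, sub_mul, one_mul, map_sub, coeff_X_pow_mul', coeff_mk,
    cardPartsGE_eq_succ_add hk m]
  split_ifs <;> push_cast <;> ring

theorem genFunPartsGE_two : genFunPartsGE 2 = (1 - X) * genFunPartsGE 1 := by
  rw [genFunPartsGE_succ one_pos, pow_one]

theorem genFunPartsGE_five :
    genFunPartsGE 5 = (1 - X ^ 4) * (1 - X ^ 3) * (1 - X ^ 2) * genFunPartsGE 2 := by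
  rw [genFunPartsGE_succ (by norm_num : 0 < 4), genFunPartsGE_succ (by norm_num : 0 < 3),
    genFunPartsGE_succ (by norm_num : 0 < 2)]
  ring

noncomputable def cardNoOnesAtMostOneTwo (m : ℕ) : ℕ :=
  Nat.card {P : m.Partition // (∀ i ∈ P.parts, 2 ≤ i) ∧ P.parts.count 2 ≤ 1}

theorem mk_cardNoOnesAtMostOneTwo :
    PowerSeries.mk (fun m => (cardNoOnesAtMostOneTwo m : ℤ)) = (1 - X ^ 4) * genFunPartsGE 2 := by
  ext m
  have hsplit := Nat.card_subtype_eq_card_and_add_card_and_not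
    (fun P : m.Partition => ∀ i ∈ P.parts, 2 ≤ i) (fun P => 2 ≤ P.parts.count 2)
  change cardPartsGE 2 m = _ at hsplit
  simp only [card_partsGE_and_le_count two_pos le_rfl, Nat.reduceMul, not_le,
    Nat.lt_succ_iff] at hsplit
  change cardPartsGE 2 m = _ + cardNoOnesAtMostOneTwo m at hsplit
  simp only [genFunPartsGE, sub_mul, one_mul, map_sub, coeff_X_pow_mul', coeff_mk]
  split_ifs at hsplit ⊢ <;> omega

namespace Multiset

def bumpMax (s : Multiset ℕ) : Multiset ℕ := (s.sup + 1) ::ₘ s.erase s.sup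

def dropMax (s : Multiset ℕ) : Multiset ℕ := (s.sup - 1) ::ₘ s.erase s.sup

variable {s : Multiset ℕ}

theorem sup_mem_of_ne_zero (hs : s ≠ 0) : s.sup ∈ s := by
  induction s using Multiset.induction with
  | empty => exact absurd rfl hs
  | cons a t ih =>
    rcases eq_or_ne t 0 with rfl | ht
    · simp
    rw [sup_cons]
    rcases le_total t.sup a with h | h
    · simp [sup_eq_left.mpr h]
    · simp [sup_eq_right.mpr h, ih ht]

theorem exists_max_two_le_count_iff :
    (∃ m ∈ s, (∀ i ∈ s, i ≤ m) ∧ 2 ≤ s.count m) ↔ 2 ≤ s.count s.sup := by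
  constructor
  · rintro ⟨m, hm, hmax, hc⟩
    rwa [le_antisymm (le_sup hm) (sup_le.mpr hmax)] at hc
  · exact fun h => ⟨s.sup, count_pos.mp (by omega), fun i hi => le_sup hi, h⟩

theorem lt_sup_of_mem_erase_sup (h : s.count s.sup < 2) {i : ℕ} (hi : i ∈ s.erase s.sup) :
    i < s.sup := by
  refine (le_sup (mem_of_mem_erase hi)).lt_of_ne fun e => ?_
  have := count_pos.mpr (e ▸ hi)
  rw [count_erase_self] at this
  omega

theorem sup_bumpMax (s : Multiset ℕ) : (bumpMax s).sup = s.sup + 1 := by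
  rw [bumpMax, sup_cons]
  exact sup_eq_left.mpr (sup_le.mpr fun i hi => Nat.le_succ_of_le (le_sup (mem_of_mem_erase hi)))

theorem count_sup_bumpMax (s : Multiset ℕ) : (bumpMax s).count (bumpMax s).sup = 1 := by
  rw [sup_bumpMax, bumpMax, count_cons_self, count_eq_zero.mpr]
  exact fun h => Nat.not_succ_le_self _ (le_sup (mem_of_mem_erase h))

theorem sup_dropMax (h : s.count s.sup < 2) : (dropMax s).sup = s.sup - 1 := by
  rw [dropMax, sup_cons]
  exact sup_eq_left.mpr
    (sup_le.mpr fun i hi => Nat.le_sub_one_of_lt (lt_sup_of_mem_erase_sup h hi))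

theorem dropMax_bumpMax (hs : s ≠ 0) : dropMax (bumpMax s) = s := by
  rw [dropMax, sup_bumpMax, bumpMax, erase_cons_head, Nat.add_sub_cancel,
    cons_erase (sup_mem_of_ne_zero hs)]

theorem bumpMax_dropMax (hs : s ≠ 0) (hpos : 0 < s.sup) (h : s.count s.sup < 2) :
    bumpMax (dropMax s) = s := by
  rw [bumpMax, sup_dropMax h, dropMax, erase_cons_head, Nat.sub_add_cancel hpos,
    cons_erase (sup_mem_of_ne_zero hs)]

theorem sum_bumpMax (hs : s ≠ 0) : (bumpMax s).sum = s.sum + 1 := by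
  rw [bumpMax, sum_cons, ← sum_erase (sup_mem_of_ne_zero hs)]
  ring

theorem sum_dropMax (hs : s ≠ 0) (hpos : 0 < s.sup) : (dropMax s).sum + 1 = s.sum := by
  rw [dropMax, sum_cons, ← sum_erase (sup_mem_of_ne_zero hs)]
  omega

theorem sum_le_two_of_forall_eq_two (h : ∀ i ∈ s, i = 2) (hc : s.count 2 ≤ 1) : s.sum ≤ 2 := by
  rw [eq_replicate_card.mpr h] at hc ⊢
  simp only [count_replicate_self, sum_replicate, smul_eq_mul] at hc ⊢
  omega

theorem three_le_sup (h2 : ∀ i ∈ s, 2 ≤ i) (hc : s.count 2 ≤ 1) (hsum : 3 ≤ s.sum) : 3 ≤ s.sup := by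
  by_contra! hsup
  have := sum_le_two_of_forall_eq_two (fun i hi => by have := le_sup hi; have := h2 i hi; omega) hc
  omega

theorem four_le_sup (h2 : ∀ i ∈ s, 2 ≤ i) (hc : s.count 2 ≤ 1) (huniq : s.count s.sup < 2)
    (hsum : 6 ≤ s.sum) : 4 ≤ s.sup := by
  by_contra! hsup
  have hs : s ≠ 0 := by rintro rfl; simp at hsum
  have hrest := sum_le_two_of_forall_eq_two (s := s.erase s.sup)
    (fun i hi => by
      have := lt_sup_of_mem_erase_sup huniq hi
      have := h2 i (mem_of_mem_erase hi)
      omega)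
    ((count_le_of_le 2 (erase_le _ _)).trans hc)
  have := sum_erase (sup_mem_of_ne_zero hs)
  omega

theorem two_le_and_count_two_le_one_cons_erase_sup (h2 : ∀ i ∈ s, 2 ≤ i) (hc : s.count 2 ≤ 1)
    {c : ℕ} (hc3 : 3 ≤ c) (hs3 : 3 ≤ s.sup) :
    (∀ i ∈ c ::ₘ s.erase s.sup, 2 ≤ i) ∧ (c ::ₘ s.erase s.sup).count 2 ≤ 1 := by
  refine ⟨fun i hi => (mem_cons.mp hi).elim (fun e => by omega)
    (fun hi => h2 i (mem_of_mem_erase hi)), ?_⟩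
  rwa [count_cons_of_ne (by omega), count_erase_of_ne (by omega)]

end Multiset

open Multiset in
theorem card_noOnesAtMostOneTwo_and_not_two_le_count_sup {n : ℕ} (hn : 6 ≤ n) :
    Nat.card {P : n.Partition // ((∀ i ∈ P.parts, 2 ≤ i) ∧ P.parts.count 2 ≤ 1) ∧
      ¬ 2 ≤ P.parts.count P.parts.sup} = cardNoOnesAtMostOneTwo (n - 1) := by
  refine Nat.Partition.card_congr_parts
    (Q := fun s => ((∀ i ∈ s, 2 ≤ i) ∧ s.count 2 ≤ 1) ∧ ¬ 2 ≤ s.count s.sup)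
    (Q' := fun s => (∀ i ∈ s, 2 ≤ i) ∧ s.count 2 ≤ 1) dropMax bumpMax ?_ ?_ ?_ ?_
  · rintro P ⟨⟨h2, hc⟩, huniq⟩
    have h4 := four_le_sup h2 hc (not_le.mp huniq) (by rw [P.parts_sum]; exact hn)
    obtain ⟨hge, hc'⟩ := two_le_and_count_two_le_one_cons_erase_sup h2 hc
      (c := P.parts.sup - 1) (by omega) (by omega)
    refine ⟨fun i hi => by have := hge i hi; omega, ?_, hge, hc'⟩
    have := sum_dropMax (P.parts_ne_zero (by omega)) (by omega)
    have := P.parts_sum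
    omega
  · rintro P ⟨h2, hc⟩
    have h3 := three_le_sup h2 hc (by rw [P.parts_sum]; omega)
    obtain ⟨hge, hc'⟩ := two_le_and_count_two_le_one_cons_erase_sup h2 hc
      (c := P.parts.sup + 1) (by omega) h3
    refine ⟨fun i hi => by have := hge i hi; omega, ?_, ⟨hge, hc'⟩,
      by rw [count_sup_bumpMax]; omega⟩
    rw [sum_bumpMax (P.parts_ne_zero (by omega)), P.parts_sum]
    omega
  · rintro P ⟨⟨h2, hc⟩, huniq⟩
    have h4 := four_le_sup h2 hc (not_le.mp huniq) (by rw [P.parts_sum]; exact hn)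
    exact bumpMax_dropMax (P.parts_ne_zero (by omega)) (by omega) (not_le.mp huniq)
  · exact fun P _ => dropMax_bumpMax (P.parts_ne_zero (by omega))

theorem card_noOnesAtMostOneTwo_and_two_le_count_sup {n : ℕ} (hn : 6 ≤ n) :
    (Nat.card {P : n.Partition // (∀ i ∈ P.parts, 2 ≤ i) ∧ P.parts.count 2 ≤ 1 ∧
      2 ≤ P.parts.count P.parts.sup} : ℤ) =
      coeff n ((1 - X) * PowerSeries.mk fun m => (cardNoOnesAtMostOneTwo m : ℤ)) := by
  obtain ⟨k, rfl⟩ : ∃ k, n = k + 1 := ⟨n - 1, by omega⟩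
  have hsplit := Nat.card_subtype_eq_card_and_add_card_and_not
    (fun P : (k + 1).Partition => (∀ i ∈ P.parts, 2 ≤ i) ∧ P.parts.count 2 ≤ 1)
    (fun P => 2 ≤ P.parts.count P.parts.sup)
  rw [card_noOnesAtMostOneTwo_and_not_two_le_count_sup hn, Nat.add_sub_cancel] at hsplit
  simp only [and_assoc] at hsplit
  change cardNoOnesAtMostOneTwo (k + 1) = _ at hsplit
  rw [sub_mul, one_mul, map_sub, coeff_succ_X_mul, coeff_mk, coeff_mk]
  omega

theorem S_eq_sum_card (r N k : ℕ) :
    S r N k = ∑ j ∈ Icc 1 N,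
      Nat.card {P : N.Partition // (∀ i ∈ P.parts, r ≤ i) ∧ j ≤ P.parts.count k} := by
  simp_rw [S, Nat.card_eq_fintype_card, Fintype.card_subtype, card_eq_sum_ones, sum_filter]
  rw [sum_comm]
  refine sum_congr rfl fun P _ => ?_
  have hcount : P.parts.count k ≤ N := by
    have := Multiset.card_nsmul_le_sum (a := 1) (fun i hi => P.parts_pos hi)
    rw [P.parts_sum, smul_eq_mul, mul_one] at this
    exact (Multiset.count_le_card _ _).trans this
  split_ifs with h
  · have hIcc : {j ∈ Icc 1 N | j ≤ P.parts.count k} = Icc 1 (P.parts.count k) := by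
      ext j
      simp only [mem_filter, mem_Icc]
      omega
    simp only [← card_filter]
    rw [filter_congr fun j _ => and_iff_right h, hIcc, Nat.card_Icc, Nat.add_sub_cancel]
  · simp [h]

theorem S_eq_sum_cardPartsGE {r k : ℕ} (hr : 0 < r) (hrk : r ≤ k) (N : ℕ) :
    S r N k = ∑ m ∈ Icc 1 N with k ∣ m, cardPartsGE r (N - m) := by
  have hk : 0 < k := hr.trans_le hrk
  rw [S_eq_sum_card]
  simp_rw [card_partsGE_and_le_count hr hrk]
  rw [← sum_filter]
  refine sum_nbij' (· * k) (· / k) ?_ ?_ ?_ ?_ fun _ _ => rfl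
  · intro j hj
    simp only [mem_filter, mem_Icc] at hj ⊢
    exact ⟨⟨Nat.mul_pos hj.1.1 hk, hj.2⟩, dvd_mul_left _ _⟩
  · rintro m hm
    simp only [mem_filter, mem_Icc] at hm ⊢
    obtain ⟨⟨hm1, hmN⟩, c, rfl⟩ := hm
    rw [Nat.mul_div_cancel_left _ hk]
    have := Nat.le_mul_of_pos_left c hk
    refine ⟨⟨Nat.pos_of_mul_pos_left hm1, by omega⟩, by rwa [mul_comm]⟩
  · exact fun j _ => Nat.mul_div_cancel _ hk
  · exact fun m hm => Nat.div_mul_cancel (mem_filter.mp hm).2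

theorem sum_S_mul_eq_coeff {r : ℕ} (hr : 0 < r) (f : ℕ → ℤ) (N : ℕ) :
    ∑ k ∈ Icc r N, (S r N k : ℤ) * f k =
      coeff N (PowerSeries.mk (fun m => ∑ d ∈ m.divisors with r ≤ d, f d) * genFunPartsGE r) := by
  calc ∑ k ∈ Icc r N, (S r N k : ℤ) * f k
      = ∑ k ∈ Icc r N, ∑ m ∈ Icc 1 N with k ∣ m, f k * cardPartsGE r (N - m) := by
        refine sum_congr rfl fun k hk => ?_
        rw [S_eq_sum_cardPartsGE hr (mem_Icc.mp hk).1, Nat.cast_sum, sum_mul]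
        exact sum_congr rfl fun _ _ => mul_comm _ _
    _ = ∑ m ∈ Icc 1 N, ∑ d ∈ m.divisors with r ≤ d, f d * cardPartsGE r (N - m) := by
        refine sum_comm' fun k m => ?_
        simp only [mem_Icc, mem_filter, Nat.mem_divisors]
        constructor
        · rintro ⟨⟨hrk, -⟩, ⟨hm1, hmN⟩, hkm⟩
          exact ⟨⟨⟨hkm, by omega⟩, hrk⟩, hm1, hmN⟩
        · rintro ⟨⟨⟨hkm, -⟩, hrk⟩, hm1, hmN⟩
          exact ⟨⟨hrk, (Nat.le_of_dvd hm1 hkm).trans hmN⟩, ⟨hm1, hmN⟩, hkm⟩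
    _ = ∑ m ∈ range (N + 1), (∑ d ∈ m.divisors with r ≤ d, f d) * cardPartsGE r (N - m) := by
        simp_rw [← sum_mul]
        refine sum_subset (fun m hm => ?_) fun m hmN hm => ?_
        · simp only [mem_Icc, mem_range] at hm ⊢
          omega
        · obtain rfl : m = 0 := by simp only [mem_Icc, mem_range] at hm hmN; omega
          simp
    _ = _ := by
        rw [coeff_mul, Nat.sum_antidiagonal_eq_sum_range_succ_mk]
        simp only [coeff_mk, genFunPartsGE]

theorem sum_divisors_filter_five_le_moebius (m : ℕ) :
    ∑ d ∈ m.divisors with 5 ≤ d, μ d =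
      if m < 5 then 0 else (if 2 ∣ m then 1 else 0) + (if 3 ∣ m then 1 else 0) - 1 := by
  rcases Nat.eq_zero_or_pos m with rfl | hm
  · simp
  have htotal : ∑ d ∈ m.divisors, μ d = if m = 1 then 1 else 0 := by
    rw [← coe_mul_zeta_apply, moebius_mul_coe_zeta, one_apply]
  have hsmall : ∑ d ∈ m.divisors with ¬ 5 ≤ d, μ d =
      1 - (if 2 ∣ m then 1 else 0) - (if 3 ∣ m then 1 else 0) := by
    rw [show {d ∈ m.divisors | ¬ 5 ≤ d} = {d ∈ range 5 | d ∣ m} by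
      ext d
      simp only [mem_filter, Nat.mem_divisors, mem_range]
      constructor
      · rintro ⟨⟨hd, -⟩, h5⟩
        exact ⟨by omega, hd⟩
      · rintro ⟨h5, hd⟩
        exact ⟨⟨hd, by omega⟩, by omega⟩, sum_filter]
    simp only [sum_range_succ, range_zero, sum_empty, Nat.zero_dvd, one_dvd,
      ArithmeticFunction.map_zero, moebius_apply_one, moebius_apply_prime Nat.prime_two,
      moebius_apply_prime Nat.prime_three, show μ 4 = 0 by decide]
    split_ifs <;> omega
  rw [← sum_filter_add_sum_filter_not m.divisors (5 ≤ ·), hsmall] at htotal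
  rcases lt_or_ge m 5 with h5 | h5
  · interval_cases m <;> simp_all
  · rw [if_neg (by omega)]
    split_ifs at htotal ⊢ <;> omega

theorem mk_sum_divisors_filter_five_le_moebius_mul :
    PowerSeries.mk (fun m => ∑ d ∈ m.divisors with 5 ≤ d, μ d) * ((1 - X ^ 2) * (1 - X ^ 3)) =
      X ^ 6 - X ^ 5 := by
  ext m
  rw [show ((1 : ℤ⟦X⟧) - X ^ 2) * (1 - X ^ 3) = 1 - X ^ 2 - X ^ 3 + X ^ 5 by ring]
  simp only [mul_add, mul_sub, mul_one, map_add, map_sub, coeff_mul_X_pow', coeff_mk, coeff_X_pow,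
    sum_divisors_filter_five_le_moebius]
  rcases lt_or_ge m 10 with h | h
  · interval_cases m <;> simp
  · simp only [if_pos (by omega : 2 ≤ m), if_pos (by omega : 3 ≤ m), if_pos (by omega : 5 ≤ m),
      if_neg (by omega : ¬ m < 5), if_neg (by omega : ¬ m - 2 < 5), if_neg (by omega : ¬ m - 3 < 5),
      if_neg (by omega : ¬ m - 5 < 5), if_neg (by omega : m ≠ 6), if_neg (by omega : m ≠ 5),
      show 2 ∣ m - 2 ↔ 2 ∣ m by omega, show 3 ∣ m - 3 ↔ 3 ∣ m by omega,
      show 2 ∣ m - 3 ↔ ¬ 2 ∣ m by omega, show 2 ∣ m - 5 ↔ ¬ 2 ∣ m by omega,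
      show 3 ∣ m - 5 ↔ 3 ∣ m - 2 by omega]
    split_ifs <;> omega

theorem card_no_ones_at_most_one_two_max_repeated_eq_neg_sum_S5_moebius
    (n : ℕ) (hn : 6 ≤ n) :
    (Nat.card {P : Nat.Partition n //
        1 ∉ P.parts ∧ P.parts.count 2 ≤ 1 ∧
        ∃ m ∈ P.parts, (∀ i ∈ P.parts, i ≤ m) ∧ 2 ≤ P.parts.count m} : ℤ) =
      -∑ k ∈ Finset.Icc 5 (n + 5),
          (S 5 (n + 5) k : ℤ) * ArithmeticFunction.moebius k ∧
    ((p n : ℤ) - 2 * (p (n - 1) : ℤ) + (p (n - 2) : ℤ)) -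
        ((p (n - 4) : ℤ) - 2 * (p (n - 5) : ℤ) + (p (n - 6) : ℤ)) =
      -∑ k ∈ Finset.Icc 5 (n + 5),
          (S 5 (n + 5) k : ℤ) * ArithmeticFunction.moebius k := by
  set G := genFunPartsGE 1
  set F : ℤ⟦X⟧ := (1 - X) ^ 2 * (1 - X ^ 4) * G
  have hS : -∑ k ∈ Icc 5 (n + 5), (S 5 (n + 5) k : ℤ) * μ k = coeff n F := by
    rw [sum_S_mul_eq_coeff (by norm_num) (μ ·), ← map_neg, ← coeff_X_pow_mul F 5 n,
      genFunPartsGE_five, genFunPartsGE_two]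
    congr 1
    linear_combination (-(1 - X ^ 4) * (1 - X) * G) * mk_sum_divisors_filter_five_le_moebius_mul
  rw [hS]
  constructor
  · rw [Nat.card_congr (Equiv.subtypeEquivRight fun P => by
        rw [Multiset.exists_max_two_le_count_iff, P.one_notMem_parts_iff]),
      card_noOnesAtMostOneTwo_and_two_le_count_sup hn, mk_cardNoOnesAtMostOneTwo,
      genFunPartsGE_two]
    congr 1
    ring
  · have hF : F = G - X ^ 1 * G - X ^ 1 * G + X ^ 2 * G - X ^ 4 * G + X ^ 5 * G + X ^ 5 * G -
        X ^ 6 * G := by ring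
    simp only [hF, map_add, map_sub, coeff_X_pow_mul', if_pos (show 1 ≤ n by omega),
      if_pos (show 2 ≤ n by omega), if_pos (show 4 ≤ n by omega), if_pos (show 5 ≤ n by omega),
      if_pos hn, G, genFunPartsGE, coeff_mk, cardPartsGE_one]
    ring
end

section
/- For every integer n ≥ 0, ∑_{k=2}^{n+2} S^{(2)}_{n+2,k} · φ(k) = ∑_{k=0}^{n} p(n-k) = p(0) + p(1) + ⋯ + p(n), where φ is Euler's totient function. -/
open Finset

/-!
Write `q m = pAtLeast 2 m` for the number of partitions of `m` into parts `≥ 2`. Removing one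
part `k` from the partitions containing it gives `S 2 N k = q (N - k) + S 2 (N - k) k`, hence
`S 2 N k = ∑_{j ≥ 1} q (N - j k)`. Weighting by `φ k` and grouping the terms by `N - m = j k`,
Gauss's identity `∑_{d ∣ M} φ d = M` turns the left-hand side into `∑_m q m (N - m - 1)`.
Removing all parts `1` gives `p t = ∑_{m ≤ t} q m`, so `∑_{t ≤ n} p t` is the same convolution.
-/

def pAtLeast (r m : ℕ) : ℕ := #(Nat.Partition.restricted m (r ≤ ·))

lemma S_eq_zero_of_lt {r n k : ℕ} (h : n < k) : S r n k = 0 :=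
  sum_eq_zero fun P _ => by
    simp [Multiset.count_eq_zero.mpr fun hk => h.not_ge (P.le_of_mem_parts hk)]

lemma S_eq_pAtLeast_add_S {r n k : ℕ} (hk : 0 < k) (hrk : r ≤ k) (hkn : k ≤ n) :
    S r n k = pAtLeast r (n - k) + S r (n - k) k := by
  set f : ∀ m, Nat.Partition m → ℕ :=
    fun m P => if ∀ i ∈ P.parts, r ≤ i then P.parts.count k else 0 with hf
  have hsupp : ∀ P ∈ (univ : Finset (Nat.Partition n)), f n P ≠ 0 → k ∈ P.parts := by
    intro P _ hP
    by_contra h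
    simp [hf, Multiset.count_eq_zero.mpr h] at hP
  calc S r n k = ∑ P : {P : Nat.Partition n // k ∈ P.parts}, f n P := by
        rw [show S r n k = ∑ P, f n P from rfl, ← sum_filter_of_ne hsupp]
        exact sum_subtype _ (by simp) _
    _ = ∑ Q : Nat.Partition (n - k), f n ((Nat.Partition.partitionWithPartEquiv hk hkn).symm Q) :=
        (Equiv.sum_comp _ _).symm
    _ = ∑ Q : Nat.Partition (n - k), ((if ∀ i ∈ Q.parts, r ≤ i then 1 else 0) + f (n - k) Q) := by
        refine sum_congr rfl fun Q _ => ?_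
        simp only [hf, Nat.Partition.partitionWithPartEquiv_symm_apply_parts, Multiset.mem_cons,
          forall_eq_or_imp, hrk, true_and, Multiset.count_cons_self]
        split_ifs <;> omega
    _ = pAtLeast r (n - k) + S r (n - k) k := by
        rw [sum_add_distrib, ← card_filter]
        rfl

lemma filter_range_dvd_sub_eq_insert {n k : ℕ} (hk : 0 < k) (hkn : k ≤ n) :
    {m ∈ range n | k ∣ n - m} = insert (n - k) {m ∈ range (n - k) | k ∣ n - k - m} := by
  ext m
  simp only [mem_filter, mem_range, mem_insert]
  constructor
  · rintro ⟨hmn, hdvd⟩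
    rcases lt_trichotomy m (n - k) with h | h | h
    · refine Or.inr ⟨h, ?_⟩
      rwa [show n - m = n - k - m + k by omega, Nat.dvd_add_self_right] at hdvd
    · exact Or.inl h
    · exact absurd (Nat.le_of_dvd (by omega) hdvd) (by omega)
  · rintro (rfl | ⟨hm, hdvd⟩)
    · exact ⟨by omega, by rw [Nat.sub_sub_self hkn]⟩
    · exact ⟨by omega, by rwa [show n - m = n - k - m + k by omega, Nat.dvd_add_self_right]⟩

lemma S_eq_sum_filter_dvd {r k : ℕ} (hk : 0 < k) (hrk : r ≤ k) (n : ℕ) :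
    S r n k = ∑ m ∈ range n with k ∣ n - m, pAtLeast r m := by
  induction n using Nat.strong_induction_on with
  | _ n ih =>
    rcases lt_or_ge n k with hnk | hkn
    · rw [S_eq_zero_of_lt hnk, eq_comm, sum_eq_zero]
      intro m hm
      simp only [mem_filter, mem_range] at hm
      exact absurd (Nat.le_of_dvd (by omega) hm.2) (by omega)
    · rw [S_eq_pAtLeast_add_S hk hrk hkn, ih (n - k) (by omega),
        filter_range_dvd_sub_eq_insert hk hkn, sum_insert (by simp)]

lemma sum_S_mul_eq_sum_pAtLeast_mul_sum_divisors {r : ℕ} (hr : 0 < r) (N : ℕ) (f : ℕ → ℕ) :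
    ∑ k ∈ Icc r N, S r N k * f k =
      ∑ m ∈ range N, pAtLeast r m * ∑ d ∈ (N - m).divisors with r ≤ d, f d := by
  have hswap : ∀ k m, k ∈ Icc r N ∧ m ∈ {m ∈ range N | k ∣ N - m} ↔
      k ∈ {d ∈ (N - m).divisors | r ≤ d} ∧ m ∈ range N := by
    intro k m
    simp only [mem_Icc, mem_filter, mem_range, Nat.mem_divisors]
    constructor
    · rintro ⟨⟨hk, -⟩, hm, hdvd⟩
      exact ⟨⟨⟨hdvd, by omega⟩, hk⟩, hm⟩
    · rintro ⟨⟨⟨hdvd, -⟩, hk⟩, hm⟩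
      exact ⟨⟨hk, by have := Nat.le_of_dvd (by omega) hdvd; omega⟩, hm, hdvd⟩
  calc ∑ k ∈ Icc r N, S r N k * f k
      = ∑ k ∈ Icc r N, ∑ m ∈ range N with k ∣ N - m, pAtLeast r m * f k :=
        sum_congr rfl fun k hk => by
          have hrk := (mem_Icc.mp hk).1
          rw [S_eq_sum_filter_dvd (by omega) hrk, sum_mul]
    _ = _ := by
        rw [sum_comm' hswap]
        simp_rw [mul_sum]

lemma sum_totient_divisors_filter_two_le (m : ℕ) :
    ∑ d ∈ m.divisors with 2 ≤ d, Nat.totient d = m - 1 := by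
  rcases Nat.eq_zero_or_pos m with rfl | hm
  · simp
  have hset : {d ∈ m.divisors | 2 ≤ d} = m.divisors.erase 1 := by
    ext d
    simp only [mem_filter, mem_erase, Nat.mem_divisors]
    constructor
    · rintro ⟨hd, h2⟩
      exact ⟨by omega, hd⟩
    · rintro ⟨h1, hdvd, hm0⟩
      exact ⟨⟨hdvd, hm0⟩, by have := Nat.pos_of_dvd_of_pos hdvd hm; omega⟩
  have hsum := Nat.sum_totient m
  rw [← add_sum_erase _ _ (Nat.one_mem_divisors.mpr hm.ne'), Nat.totient_one] at hsum
  rw [hset]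
  omega

lemma p_succ (t : ℕ) : p (t + 1) = p t + pAtLeast 2 (t + 1) := by
  have hone : #{P : Nat.Partition (t + 1) | 1 ∈ P.parts} = p t := by
    rw [← Fintype.card_subtype]
    exact Fintype.card_congr (Nat.Partition.partitionWithPartEquiv le_rfl (by omega))
  have htwo : #{P : Nat.Partition (t + 1) | 1 ∉ P.parts} = pAtLeast 2 (t + 1) := by
    rw [pAtLeast, Nat.Partition.restricted]
    congr 1
    ext P
    simp only [mem_filter, mem_univ, true_and]
    constructor
    · intro h i hi
      have := P.parts_pos hi
      have : i ≠ 1 := fun h1 => h (h1 ▸ hi)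
      omega
    · intro h h1
      exact absurd (h 1 h1) (by omega)
  rw [← hone, ← htwo, card_filter_add_card_filter_not]
  rfl

lemma p_eq_sum_range_pAtLeast_two (t : ℕ) : p t = ∑ m ∈ range (t + 1), pAtLeast 2 m := by
  induction t with
  | zero => rfl
  | succ t ih => rw [p_succ, ih, sum_range_succ _ (t + 1)]

lemma sum_range_p (n : ℕ) :
    ∑ t ∈ range (n + 1), p t = ∑ m ∈ range (n + 1), pAtLeast 2 m * (n + 1 - m) := by
  simp_rw [p_eq_sum_range_pAtLeast_two, range_eq_Ico]
  rw [← sum_Ico_Ico_comm]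
  refine sum_congr rfl fun m _ => ?_
  rw [sum_const, Nat.card_Ico, smul_eq_mul, mul_comm]

theorem sum_S2_totient_eq_sum_partitions (n : ℕ) :
    ∑ k ∈ Finset.Icc 2 (n + 2), S 2 (n + 2) k * Nat.totient k =
      ∑ k ∈ Finset.range (n + 1), p (n - k) := by
  calc ∑ k ∈ Icc 2 (n + 2), S 2 (n + 2) k * Nat.totient k
      = ∑ m ∈ range (n + 2), pAtLeast 2 m * (n + 2 - m - 1) := by
        simp_rw [sum_S_mul_eq_sum_pAtLeast_mul_sum_divisors two_pos,
          sum_totient_divisors_filter_two_le]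
    _ = ∑ m ∈ range (n + 1), pAtLeast 2 m * (n + 1 - m) := by
        rw [sum_range_succ, show n + 2 - (n + 1) - 1 = 0 by omega, mul_zero, add_zero]
        exact sum_congr rfl fun m _ => by rw [show n + 2 - m - 1 = n + 1 - m by omega]
    _ = ∑ k ∈ range (n + 1), p (n - k) := by
        rw [← sum_range_p, ← sum_range_reflect]
        simp
end
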